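/- arXiv:2412.01670 — 2 statements merged into one kernel-verified Lean document; each statement's English description precedes it below -/
import Mathlib

section
/- There exists a constant C > 0 such that for all μ, K > 0, the quantity 4μ² ∫_{|k| ≥ K} |(μ|k| + 2k²)/(|k|(μ|k| + k²)²)|² dk is at most C/K. In other words, the L² norm of the residual potential V_K satisfies ‖V_K‖_{L²}² ≤ C/K. -/
/-!
The multiplier is at most `2 / (μ |k|²)`, so the integrand `4μ² |·|²` is dominated by
`16 |k|⁻⁴` uniformly in `μ`. In polar coordinates `∫_{|k| ≥ K} |k|⁻⁴ dk = 4π/K` in `ℝ³`,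
which gives `C = 64π`.
-/

open MeasureTheory Real

noncomputable section

abbrev E3 := EuclideanSpace ℝ (Fin 3)

open Metric Set Module

section RadialTail

variable {E : Type*} [NormedAddCommGroup E] {K p : ℝ}

lemma indicator_Ici_rpow_norm_eq :
    (fun x : E => (Ici K).indicator (fun y : ℝ => y ^ (-p)) ‖x‖) =
      {x : E | K ≤ ‖x‖}.indicator (fun x => ‖x‖ ^ (-p)) := by
  ext x
  by_cases hx : K ≤ ‖x‖ <;> simp [indicator, hx]

variable [NormedSpace ℝ E] [FiniteDimensional ℝ E] [Nontrivial E]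

lemma pow_smul_indicator_rpow_eqOn :
    EqOn (fun y : ℝ => y ^ (finrank ℝ E - 1) • (Ici K).indicator (fun y => y ^ (-p)) y)
      ((Ici K).indicator fun y => y ^ ((finrank ℝ E : ℝ) - p - 1)) (Ioi 0) := by
  intro y (hy : 0 < y)
  by_cases hyK : y ∈ Ici K
  · have hn : 1 ≤ finrank ℝ E := finrank_pos
    simp only [indicator_of_mem hyK, smul_eq_mul]
    rw [← rpow_natCast, ← rpow_add hy, Nat.cast_sub hn, Nat.cast_one]
    ring_nf
  · simp [indicator_of_notMem hyK]

variable [MeasurableSpace E] [BorelSpace E] (μ : Measure E) [μ.IsAddHaarMeasure]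

lemma integrableOn_setOf_le_norm_rpow_neg (hK : 0 < K) (hp : (finrank ℝ E : ℝ) < p) :
    IntegrableOn (fun x : E => ‖x‖ ^ (-p)) {x | K ≤ ‖x‖} μ := by
  rw [← integrable_indicator_iff (isClosed_le continuous_const continuous_norm).measurableSet,
    ← indicator_Ici_rpow_norm_eq, integrable_fun_norm_addHaar μ,
    integrableOn_congr_fun pow_smul_indicator_rpow_eqOn measurableSet_Ioi]
  refine Integrable.integrableOn ?_
  rw [integrable_indicator_iff measurableSet_Ici, integrableOn_Ici_iff_integrableOn_Ioi]
  exact integrableOn_Ioi_rpow_of_lt (by linarith) hK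

lemma setIntegral_setOf_le_norm_rpow_neg (hK : 0 < K) (hp : (finrank ℝ E : ℝ) < p) :
    ∫ x in {x | K ≤ ‖x‖}, ‖x‖ ^ (-p) ∂μ =
      finrank ℝ E * μ.real (ball 0 1) * K ^ ((finrank ℝ E : ℝ) - p) / (p - finrank ℝ E) := by
  rw [← integral_indicator (isClosed_le continuous_const continuous_norm).measurableSet,
    ← indicator_Ici_rpow_norm_eq, integral_fun_norm_addHaar μ,
    setIntegral_congr_fun measurableSet_Ioi pow_smul_indicator_rpow_eqOn,
    setIntegral_indicator measurableSet_Ici, inter_eq_self_of_subset_right (Ici_subset_Ioi.2 hK),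
    integral_Ici_eq_integral_Ioi, integral_Ioi_rpow_of_lt (by linarith) hK, sub_add_cancel, neg_div, ← div_neg, neg_sub, nsmul_eq_mul, smul_eq_mul]
  ring

end RadialTail

lemma multiplier_le_two_div {μ r : ℝ} (hμ : 0 < μ) (hr : 0 < r) :
    (μ * r + 2 * r ^ 2) / (r * (μ * r + r ^ 2) ^ 2) ≤ 2 / (μ * r ^ 2) := by
  -- cleared of denominators this is `r³ μ (μ + 2r) ≤ 2 r³ (μ + r)²`
  rw [div_le_div_iff₀ (by positivity) (by positivity)]
  nlinarith [mul_pos (mul_pos hμ hμ) (pow_pos hr 3), mul_pos hμ (pow_pos hr 4), pow_pos hr 5]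

lemma four_mul_sq_mul_sq_abs_multiplier_le {μ r : ℝ} (hμ : 0 < μ) (hr : 0 < r) :
    4 * μ ^ 2 * |(μ * r + 2 * r ^ 2) / (r * (μ * r + r ^ 2) ^ 2)| ^ 2 ≤ 16 * r ^ (-4 : ℝ) := by
  have hF : 0 ≤ (μ * r + 2 * r ^ 2) / (r * (μ * r + r ^ 2) ^ 2) := by positivity
  calc 4 * μ ^ 2 * |(μ * r + 2 * r ^ 2) / (r * (μ * r + r ^ 2) ^ 2)| ^ 2
      ≤ 4 * μ ^ 2 * (2 / (μ * r ^ 2)) ^ 2 := by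
        rw [abs_of_nonneg hF]
        gcongr 4 * μ ^ 2 * ?_ ^ 2
        exact multiplier_le_two_div hμ hr
    _ = 16 * r ^ (-4 : ℝ) := by
        rw [rpow_neg hr.le, show (4 : ℝ) = (4 : ℕ) by norm_num, rpow_natCast]
        field_simp
        ring

/-- `‖V_K‖_{L²}² ≤ C/K`: there is `C > 0` such that for all `μ, K > 0`,
`4μ² ∫_{|k| ≥ K} |(μ|k| + 2k²)/(|k|(μ|k| + k²)²)|² dk ≤ C/K`. -/
theorem VK_L2_bound :
    ∃ C > (0 : ℝ), ∀ μ K : ℝ, 0 < μ → 0 < K →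
      4 * μ ^ 2 * (∫ k in {k : E3 | K ≤ ‖k‖},
        |(μ * ‖k‖ + 2 * ‖k‖ ^ 2) / (‖k‖ * (μ * ‖k‖ + ‖k‖ ^ 2) ^ 2)| ^ 2) ≤ C / K := by
  refine ⟨64 * π, by positivity, fun μ K hμ hK => ?_⟩
  have hdim : (finrank ℝ E3 : ℝ) < 4 := by norm_num
  have hball : volume.real (ball (0 : E3) 1) = 4 * π / 3 := by
    rw [measureReal_def, EuclideanSpace.volume_ball_fin_three, ENNReal.ofReal_one, one_pow, one_mul,
      ENNReal.toReal_ofReal (by positivity)]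
    ring
  rw [← integral_const_mul]
  calc _ ≤ ∫ k in {k : E3 | K ≤ ‖k‖}, 16 * ‖k‖ ^ (-4 : ℝ) :=
        setIntegral_mono_of_nonneg (fun _ _ => by positivity)
          (fun k hk => four_mul_sq_mul_sq_abs_multiplier_le hμ (hK.trans_le hk))
          ((integrableOn_setOf_le_norm_rpow_neg volume hK hdim).const_mul 16)
    _ = 64 * π / K := by
        rw [integral_const_mul, setIntegral_setOf_le_norm_rpow_neg volume hK hdim, hball]
        norm_num [rpow_neg_one]
        ring
end
end

section
/- For every s with 0 < s ≤ 1/2 there exists C > 0 such that for all μ, K > 0: ∫_{|k| ≥ K} |k|^{-2s} · |k|² / (|k| (k² + μ|k|)²) dk ≤ C (μ + K)^{-2s}. Equivalently, ‖ω^{-s} k B_K‖_{L²} ≤ C (μ + K)^{-s} where B_K(k) = |k|^{-1/2} 𝟙_{|k| ≥ K}/(k² + μ|k|) and ω(k) = |k|. -/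
/-! In polar coordinates the integral is `3 |B₁| ∫_K^∞ r^(1-2s) / (r + μ)² dr`. Since `1 - 2s ≥ 0`,
`r^(1-2s) ≤ (r + μ)^(1-2s)`, and `∫_K^∞ (r + μ)^(-1-2s) dr = (μ + K)^(-2s) / (2s)`. -/

open MeasureTheory Real

noncomputable section

open Set Metric Module

lemma setIntegral_fun_norm_ge_addHaar {E F : Type*} [NormedAddCommGroup E] [NormedSpace ℝ E]
    [FiniteDimensional ℝ E] [MeasurableSpace E] [BorelSpace E] [Nontrivial E]
    [NormedAddCommGroup F] [NormedSpace ℝ F] (μ : Measure E) [μ.IsAddHaarMeasure]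
    {K : ℝ} (hK : 0 < K) (f : ℝ → F) :
    ∫ x in {x : E | K ≤ ‖x‖}, f ‖x‖ ∂μ
      = finrank ℝ E • μ.real (ball 0 1) • ∫ y in Ici K, y ^ (finrank ℝ E - 1) • f y := by
  have hKpos : Ioi (0 : ℝ) ∩ Ici K = Ici K := inter_eq_right.2 fun y hy => hK.trans_le hy
  rw [← integral_indicator (measurableSet_le measurable_const measurable_norm)]
  change ∫ x, (norm ⁻¹' Ici K).indicator (f ∘ norm) x ∂μ = _
  simp_rw [indicator_comp_right, integral_fun_norm_addHaar μ ((Ici K).indicator f),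
    ← indicator_smul]
  rw [setIntegral_indicator measurableSet_Ici, hKpos]

lemma integral_Ioi_add_rpow_of_lt {a c m : ℝ} (ha : a < -1) (hcm : 0 < c + m) :
    ∫ t in Ioi c, (t + m) ^ a = -(c + m) ^ (a + 1) / (a + 1) := by
  have h := (measurePreserving_add_right volume m).setIntegral_preimage_emb
    (measurableEmbedding_addRight m) (fun t => t ^ a) (Ioi (c + m))
  rw [preimage_add_const_Ioi, add_sub_cancel_right] at h
  rw [h, integral_Ioi_rpow_of_lt ha hcm]

/-- `|k|^(-2s) |k|² |B_K(k)|²` as a function of `r = |k| ≥ K`. -/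
def dressingProfile (s μ r : ℝ) : ℝ := r ^ (-(2 * s)) * r ^ 2 / (r * (r ^ 2 + μ * r) ^ 2)

lemma dressingProfile_nonneg {s μ r : ℝ} (hr : 0 ≤ r) : 0 ≤ dressingProfile s μ r := by
  unfold dressingProfile; positivity

lemma sq_mul_dressingProfile_le {s μ r : ℝ} (hs : s ≤ 1 / 2) (hμ : 0 ≤ μ) (hr : 0 < r) :
    r ^ 2 * dressingProfile s μ r ≤ (r + μ) ^ (-(1 + 2 * s)) := by
  have hrμ : 0 < r + μ := by linarith
  calc r ^ 2 * dressingProfile s μ r = r ^ (1 - 2 * s) / (r + μ) ^ 2 := by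
        rw [dressingProfile, sub_eq_neg_add, rpow_add hr, rpow_one]
        field_simp
    _ ≤ (r + μ) ^ (1 - 2 * s) / (r + μ) ^ 2 := by
        gcongr <;> linarith
    _ = (r + μ) ^ (-(1 + 2 * s)) := by
        rw [← rpow_two, ← rpow_sub hrμ]
        ring_nf

lemma setIntegral_sq_mul_dressingProfile_le {s μ K : ℝ} (hs0 : 0 < s) (hs : s ≤ 1 / 2)
    (hμ : 0 ≤ μ) (hK : 0 < K) :
    ∫ r in Ici K, r ^ 2 * dressingProfile s μ r ≤ (μ + K) ^ (-(2 * s)) / (2 * s) := by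
  have ha : -(1 + 2 * s) < -1 := by linarith
  calc ∫ r in Ici K, r ^ 2 * dressingProfile s μ r
      ≤ ∫ r in Ici K, (r + μ) ^ (-(1 + 2 * s)) :=
        setIntegral_mono_of_nonneg
          (fun r hr => mul_nonneg (sq_nonneg r) (dressingProfile_nonneg (hK.trans_le hr).le))
          (fun r hr => sq_mul_dressingProfile_le hs hμ (hK.trans_le hr))
          ((integrableOn_Ici_iff_integrableOn_Ioi).2
            (integrableOn_add_rpow_Ioi_of_lt ha (by linarith)))
    _ = (μ + K) ^ (-(2 * s)) / (2 * s) := by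
        rw [integral_Ici_eq_integral_Ioi, integral_Ioi_add_rpow_of_lt ha (by linarith),
          show -(1 + 2 * s) + 1 = -(2 * s) by ring, add_comm K μ, neg_div_neg_eq]

/-- Weighted bound on the dressing form factor: for every `0 < s ≤ 1/2` there is `C > 0`
such that for all `μ, K > 0`,
`∫_{|k| ≥ K} |k|^{-2s} |k|² / (|k|(k² + μ|k|)²) dk ≤ C (μ + K)^{-2s}`,
i.e. `‖ω^{-s} k B_K‖_{L²} ≤ C (μ + K)^{-s}`. -/
theorem omega_s_kBK_bound (s : ℝ) (hs0 : 0 < s) (hs : s ≤ 1 / 2) :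
    ∃ C > (0 : ℝ), ∀ μ K : ℝ, 0 < μ → 0 < K →
      (∫ k in {k : E3 | K ≤ ‖k‖},
          ‖k‖ ^ (-(2 * s)) * ‖k‖ ^ 2 / (‖k‖ * (‖k‖ ^ 2 + μ * ‖k‖) ^ 2))
        ≤ C * (μ + K) ^ (-(2 * s)) := by
  set c := (volume : Measure E3).real (ball 0 1)
  have hc : 0 < c :=
    ENNReal.toReal_pos (measure_ball_pos volume 0 one_pos).ne' measure_ball_lt_top.ne
  refine ⟨3 * c / (2 * s), by positivity, fun μ K hμ hK => ?_⟩
  calc ∫ k in {k : E3 | K ≤ ‖k‖}, dressingProfile s μ ‖k‖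
      = 3 * (c * ∫ r in Ici K, r ^ 2 * dressingProfile s μ r) := by
        rw [setIntegral_fun_norm_ge_addHaar volume hK, finrank_euclideanSpace_fin]
        norm_num [c]
    _ ≤ 3 * (c * ((μ + K) ^ (-(2 * s)) / (2 * s))) := by
        gcongr
        exact setIntegral_sq_mul_dressingProfile_le hs0 hs hμ.le hK
    _ = 3 * c / (2 * s) * (μ + K) ^ (-(2 * s)) := by ring
end
end
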